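/- Let (L, [−,−]) be a Leibniz algebra over a field F, λ, μ : L → L linear maps, s ∈ L, and {a,b} = [a,b] + λ(a) + μ(b) + s the associated bi-affine bracket with Leibnizian Λ(a,b,c) = {a,{b,c}} − {{a,b},c} + {{a,c},b}. Then Λ(a,b,c) = {a,{b,b}} for all a, b, c ∈ L (i.e. L is a homogeneous Leibniz affgebra) if and only if the following hold for all a, b ∈ L: (1) [λ(a),b] − [a,μ(b)] = λ([a,b]); (2) [μ(a),b] − [μ(b),a] = μ([a,b]); (3) [s,a] + μ(a) = μ(μ(a)) + λ(μ(a)). -/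

import Mathlib

/-!
Write `P`, `Q`, `R` for the defects `lamDefect`, `muDefect`, `constDefect` of conditions
(1), (2), (3). After the Leibniz rule cancels the pure bracket terms, expanding the bi-affine
bracket gives
`Λ(a,b,c) - {a,{b,b}} = P(a,b) - P(a,c) - Q(b,c) + Q(b,b) + R(b) - R(c)`.
All defects vanish at `0`, so specialising to `(0,0,c)`, `(0,b,0)`, `(0,b,c)` and `(a,b,0)`
isolates `R`, then `Q(b,b)`, then `Q`, then `P`.
-/

namespace LeibnizAffgebra

variable {R L : Type*} [CommRing R] [AddCommGroup L] [Module R L]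
  (B : L →ₗ[R] L →ₗ[R] L) (lam mu : L →ₗ[R] L) (s : L)

def biAffineBracket (a b : L) : L := B a b + lam a + mu b + s

def leibnizian (br : L → L → L) (a b c : L) : L :=
  br a (br b c) - br (br a b) c + br (br a c) b

def lamDefect (a b : L) : L := B (lam a) b - B a (mu b) - lam (B a b)

def muDefect (a b : L) : L := B (mu a) b - B (mu b) a - mu (B a b)

def constDefect (a : L) : L := B s a + mu a - (mu (mu a) + lam (mu a))

@[simp] lemma lamDefect_zero_left (b : L) : lamDefect B lam mu 0 b = 0 := by
  simp [lamDefect]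

@[simp] lemma lamDefect_zero_right (a : L) : lamDefect B lam mu a 0 = 0 := by
  simp [lamDefect]

@[simp] lemma muDefect_zero_left (b : L) : muDefect B mu 0 b = 0 := by
  simp [muDefect]

@[simp] lemma muDefect_zero_right (a : L) : muDefect B mu a 0 = 0 := by
  simp [muDefect]

@[simp] lemma constDefect_zero : constDefect B lam mu s 0 = 0 := by
  simp [constDefect]

lemma leibnizian_sub_bracket_self
    (leib : ∀ a b c : L, B (B a b) c = B (B a c) b + B a (B b c)) (a b c : L) :
    leibnizian (biAffineBracket B lam mu s) a b c
        - biAffineBracket B lam mu s a (biAffineBracket B lam mu s b b) =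
      lamDefect B lam mu a b - lamDefect B lam mu a c - muDefect B mu b c
        + muDefect B mu b b + constDefect B lam mu s b - constDefect B lam mu s c := by
  have hsq : B a (B b b) = 0 := left_eq_add.mp (leib a b b)
  simp only [leibnizian, biAffineBracket, lamDefect, muDefect, constDefect, map_add,
    LinearMap.add_apply, leib a b c, hsq]
  abel

lemma leibnizian_eq_bracket_self_iff
    (leib : ∀ a b c : L, B (B a b) c = B (B a c) b + B a (B b c)) :
    (∀ a b c : L, leibnizian (biAffineBracket B lam mu s) a b c =
        biAffineBracket B lam mu s a (biAffineBracket B lam mu s b b)) ↔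
      (∀ a b : L, lamDefect B lam mu a b = 0) ∧ (∀ a b : L, muDefect B mu a b = 0) ∧
        ∀ a : L, constDefect B lam mu s a = 0 := by
  simp only [← sub_eq_zero (a := leibnizian _ _ _ _), leibnizian_sub_bracket_self B lam mu s leib]
  refine ⟨fun H => ?_, fun ⟨hP, hQ, hR⟩ a b c => by simp [hP, hQ, hR]⟩
  have hR : ∀ c : L, constDefect B lam mu s c = 0 := fun c => by simpa using H 0 0 c
  have hQ_diag : ∀ b : L, muDefect B mu b b = 0 := fun b => by simpa [hR] using H 0 b 0
  have hQ : ∀ b c : L, muDefect B mu b c = 0 := fun b c => by simpa [hR, hQ_diag] using H 0 b c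
  exact ⟨fun a b => by simpa [hR, hQ] using H a b 0, hQ, hR⟩

end LeibnizAffgebra

open LeibnizAffgebra in
/-- For a Leibniz algebra `(L, B)` with bi-affine bracket
`{a,b} = B a b + lam a + mu b + s` and Leibnizian
`Λ(a,b,c) = {a,{b,c}} − {{a,b},c} + {{a,c},b}`, the bracket is homogeneous
(`Λ(a,b,c) = {a,{b,b}}` for all `a b c`) if and only if conditions (1)–(3) hold. -/
theorem homogeneous_leibniz_affgebra_characterization
    {F L : Type*} [Field F] [AddCommGroup L] [Module F L]
    (B : L →ₗ[F] L →ₗ[F] L)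
    (leib : ∀ a b c : L, B (B a b) c = B (B a c) b + B a (B b c))
    (lam mu : L →ₗ[F] L) (s : L)
    (br : L → L → L) (hbr : ∀ a b, br a b = B a b + lam a + mu b + s)
    (Λ : L → L → L → L)
    (hΛ : ∀ a b c, Λ a b c = br a (br b c) - br (br a b) c + br (br a c) b) :
    (∀ a b c : L, Λ a b c = br a (br b b)) ↔
      ((∀ a b : L, B (lam a) b - B a (mu b) = lam (B a b)) ∧
       (∀ a b : L, B (mu a) b - B (mu b) a = mu (B a b)) ∧
       (∀ a : L, B s a + mu a = mu (mu a) + lam (mu a))) := by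
  obtain rfl : br = biAffineBracket B lam mu s := funext₂ hbr
  obtain rfl : Λ = leibnizian (biAffineBracket B lam mu s) := funext₃ hΛ
  simpa only [lamDefect, muDefect, constDefect, sub_eq_zero] using
    leibnizian_eq_bracket_self_iff B lam mu s leib
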